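/- Consider the composite function f = h ∘ c and let x̄ be a stationary point of f. If the Clarke subdifferential map ∂f is metrically subregular at (x̄, 0) with modulus κ, then for every ε̄ > 0 there exists τ > 0 such that dist(x, (∂f)⁻¹(0)) ≤ ((3Lβε + 2)κ + 2ε)·‖G(x, ε)‖ for all x with ‖x − x̄‖ < τ and all ε ∈ (0, ε̄), where ‖G(x, ε)‖ denotes the norm of the unique element of G(x, ε). -/

import Mathlib

open Filter Topology Set
open scoped RealInnerProductSpace NNReal

noncomputable section

/-- The subdifferential (in the sense of convex analysis) of `h` at `u`. -/
def convexSubdiff {m : ℕ} (h : EuclideanSpace ℝ (Fin m) → ℝ)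
    (u : EuclideanSpace ℝ (Fin m)) : Set (EuclideanSpace ℝ (Fin m)) :=
  {v | ∀ z, h u + ⟪v, z - u⟫ ≤ h z}

/-- `∇c(x)`, the transpose (adjoint) of the Jacobian of `c` at `x`, acting `ℝᵐ → ℝⁿ`. -/
def nablaC {n m : ℕ}
    (c' : EuclideanSpace ℝ (Fin n) → (EuclideanSpace ℝ (Fin n) →L[ℝ] EuclideanSpace ℝ (Fin m)))
    (x : EuclideanSpace ℝ (Fin n)) :
    EuclideanSpace ℝ (Fin m) →L[ℝ] EuclideanSpace ℝ (Fin n) :=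
  ContinuousLinearMap.adjoint (c' x)

/-- The Clarke subdifferential of the composite `f = h ∘ c`:  `∂f(x) = ∇c(x) ∂h(c(x))`. -/
def compSubdiff {n m : ℕ} (c : EuclideanSpace ℝ (Fin n) → EuclideanSpace ℝ (Fin m))
    (c' : EuclideanSpace ℝ (Fin n) → (EuclideanSpace ℝ (Fin n) →L[ℝ] EuclideanSpace ℝ (Fin m)))
    (h : EuclideanSpace ℝ (Fin m) → ℝ) (x : EuclideanSpace ℝ (Fin n)) :
    Set (EuclideanSpace ℝ (Fin n)) :=
  (fun v => nablaC c' x v) '' convexSubdiff h (c x)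

/-- `y` belongs to the effective domain of the Fenchel conjugate `h*`. -/
def inDomStar {m : ℕ} (h : EuclideanSpace ℝ (Fin m) → ℝ)
    (y : EuclideanSpace ℝ (Fin m)) : Prop :=
  BddAbove (Set.range fun z => ⟪y, z⟫ - h z)

/-- The Fenchel conjugate `h*(y) = sup_z {⟨y, z⟩ − h(z)}` (real-valued on its domain). -/
def fenchelConj {m : ℕ} (h : EuclideanSpace ℝ (Fin m) → ℝ)
    (y : EuclideanSpace ℝ (Fin m)) : ℝ :=
  ⨆ z, (⟪y, z⟫ - h z)

/-- The dual regularized solution set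
`Y^ε(x) = argmax_y {yᵀc(x) − h*(y) − (ε/2)‖∇c(x) y‖²}`
(the maximization being over the effective domain of `h*`). -/
def regDual {n m : ℕ} (c : EuclideanSpace ℝ (Fin n) → EuclideanSpace ℝ (Fin m))
    (c' : EuclideanSpace ℝ (Fin n) → (EuclideanSpace ℝ (Fin n) →L[ℝ] EuclideanSpace ℝ (Fin m)))
    (h : EuclideanSpace ℝ (Fin m) → ℝ) (ε : ℝ) (x : EuclideanSpace ℝ (Fin n)) :
    Set (EuclideanSpace ℝ (Fin m)) :=
  {y | inDomStar h y ∧ ∀ y', inDomStar h y' →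
    ⟪y', c x⟫ - fenchelConj h y' - ε / 2 * ‖nablaC c' x y'‖ ^ 2 ≤
      ⟪y, c x⟫ - fenchelConj h y - ε / 2 * ‖nablaC c' x y‖ ^ 2}

/-- The subgradient-regularized map `G(x, ε) = {∇c(x) y : y ∈ Y^ε(x)}`. -/
def Gcomp {n m : ℕ} (c : EuclideanSpace ℝ (Fin n) → EuclideanSpace ℝ (Fin m))
    (c' : EuclideanSpace ℝ (Fin n) → (EuclideanSpace ℝ (Fin n) →L[ℝ] EuclideanSpace ℝ (Fin m)))
    (h : EuclideanSpace ℝ (Fin m) → ℝ) (x : EuclideanSpace ℝ (Fin n)) (ε : ℝ) :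
    Set (EuclideanSpace ℝ (Fin n)) :=
  (fun y => nablaC c' x y) '' regDual c c' h ε x

/-- The prox-linear objective `z ↦ h(c(x) + ∇c(x)ᵀ(z − x)) + ‖z − x‖²/(2ε)`. -/
def proxObj {n m : ℕ} (c : EuclideanSpace ℝ (Fin n) → EuclideanSpace ℝ (Fin m))
    (c' : EuclideanSpace ℝ (Fin n) → (EuclideanSpace ℝ (Fin n) →L[ℝ] EuclideanSpace ℝ (Fin m)))
    (h : EuclideanSpace ℝ (Fin m) → ℝ) (ε : ℝ) (x z : EuclideanSpace ℝ (Fin n)) : ℝ :=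
  h (c x + (c' x) (z - x)) + ‖z - x‖ ^ 2 / (2 * ε)

/-!
Write `g = ∇c(x) y` with `y ∈ Y^ε(x)`. The optimality condition of the dual problem says
`y ∈ ∂h(c x - ε ∇c(x)ᵀ g)`, so `g` is a subgradient of the convex model
`z ↦ h(c x + ∇c(x)ᵀ(z - x))` at the prox-linear point `p = x - ε g`. As the model is within
`Lβ/2 ‖z - x‖²` of `f`, the point `p` almost minimizes `f` plus a quadratic and a linear term.
Adding the penalty `‖z - p‖² / (2ε) + Lβε‖g‖ ‖z - p‖` produces an exact minimizer `z` with
`‖z - p‖ ≤ ε‖g‖`, and the Fermat rule at `z` (through the max-formula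
`h'(u; v) = max_{w ∈ ∂h(u)} ⟪w, v⟫`, a consequence of Hahn–Banach) gives
`dist(0, ∂f(z)) ≤ (3Lβε + 2)‖g‖`. Metric subregularity at `z` and `‖x - z‖ ≤ 2ε‖g‖` conclude,
unless `z` is far from `x̄`; then `2ε‖g‖` already exceeds `‖x - x̄‖ ≥ dist(x, (∂f)⁻¹(0))`.
-/

lemma le_of_forall_le_add_mul {a b C t₀ : ℝ} (ht₀ : 0 < t₀)
    (H : ∀ t, 0 < t → t ≤ t₀ → a ≤ b + C * t) : a ≤ b := by
  have hlim : Tendsto (fun t => b + C * t) (𝓝[>] 0) (𝓝 b) := by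
    simpa using ((by fun_prop : Continuous fun t : ℝ => b + C * t).tendsto 0).mono_left
      nhdsWithin_le_nhds
  exact ge_of_tendsto hlim (eventually_of_mem (Ioc_mem_nhdsGT ht₀) fun t ht => H t ht.1 ht.2)

section DirDeriv

variable {E : Type*} [NormedAddCommGroup E] [NormedSpace ℝ E] {h : E → ℝ} {L : ℝ≥0}

/-- For convex `h` the infimum of the difference quotients is the one-sided directional
derivative `h'(u; v)`. -/
def dirDeriv (h : E → ℝ) (u v : E) : ℝ :=
  ⨅ t : Ioi (0 : ℝ), (h (u + (t : ℝ) • v) - h u) / t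

lemma ConvexOn.slope_le_slope (hconv : ConvexOn ℝ univ h) (u v : E) {s t : ℝ}
    (hs : 0 < s) (hst : s ≤ t) :
    (h (u + s • v) - h u) / s ≤ (h (u + t • v) - h u) / t := by
  have hline : ConvexOn ℝ univ fun r : ℝ => h (u + r • v) := by
    simpa [Function.comp_def, AffineMap.lineMap_apply, add_comm] using
      hconv.comp_affineMap (AffineMap.lineMap u (u + v))
  simpa using hline.secant_mono (mem_univ 0) (mem_univ s) (mem_univ t) hs.ne'
    (hs.trans_le hst).ne' hst

lemma LipschitzWith.abs_slope_le (hL : LipschitzWith L h) (u v : E) {t : ℝ} (ht : 0 < t) :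
    |(h (u + t • v) - h u) / t| ≤ L * ‖v‖ := by
  rw [abs_div, abs_of_pos ht, div_le_iff₀ ht]
  calc |h (u + t • v) - h u| ≤ L * ‖u + t • v - u‖ := by
        simpa [← dist_eq_norm, Real.dist_eq] using hL.dist_le_mul (u + t • v) u
    _ = L * ‖v‖ * t := by rw [add_sub_cancel_left, norm_smul, Real.norm_of_nonneg ht.le]; ring

lemma LipschitzWith.dirDeriv_le_slope (hL : LipschitzWith L h) (u v : E) {t : ℝ} (ht : 0 < t) :
    dirDeriv h u v ≤ (h (u + t • v) - h u) / t :=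
  ciInf_le ⟨-(L * ‖v‖), by
    rintro _ ⟨s, rfl⟩
    exact neg_le_of_abs_le (hL.abs_slope_le u v s.2)⟩ (⟨t, ht⟩ : Ioi (0 : ℝ))

lemma le_dirDeriv {u v : E} {B : ℝ} (H : ∀ t : ℝ, 0 < t → B ≤ (h (u + t • v) - h u) / t) :
    B ≤ dirDeriv h u v :=
  le_ciInf fun t => H t t.2

lemma LipschitzWith.abs_dirDeriv_le (hL : LipschitzWith L h) (u v : E) :
    |dirDeriv h u v| ≤ L * ‖v‖ :=
  abs_le.2 ⟨le_dirDeriv fun _ ht => neg_le_of_abs_le (hL.abs_slope_le u v ht),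
    (hL.dirDeriv_le_slope u v one_pos).trans (le_of_abs_le (hL.abs_slope_le u v one_pos))⟩

lemma le_dirDeriv_of_le_add_mul (hconv : ConvexOn ℝ univ h) {u v : E} {B C : ℝ}
    (H : ∀ t : ℝ, 0 < t → B ≤ (h (u + t • v) - h u) / t + C * t) : B ≤ dirDeriv h u v :=
  le_dirDeriv fun t ht => le_of_forall_le_add_mul (C := C) ht fun s hs hst => by
    linarith [H s hs, hconv.slope_le_slope u v hs hst]

@[simp] lemma dirDeriv_zero (u : E) : dirDeriv h u 0 = 0 := by
  simp [dirDeriv]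

lemma LipschitzWith.dirDeriv_smul (hL : LipschitzWith L h) (u v : E) {a : ℝ} (ha : 0 < a) :
    dirDeriv h u (a • v) = a * dirDeriv h u v := by
  have hslope : ∀ t,
      (h (u + t • a • v) - h u) / t = a * ((h (u + (a * t) • v) - h u) / (a * t)) := by
    intro t
    rw [smul_smul, mul_comm t a]
    field_simp
  apply le_antisymm
  · rw [← div_le_iff₀' ha]
    refine le_dirDeriv fun s hs => ?_
    have := hL.dirDeriv_le_slope u (a • v) (div_pos hs ha)
    rwa [hslope, mul_div_cancel₀ s ha.ne', ← div_le_iff₀' ha] at this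
  · refine le_dirDeriv fun t ht => ?_
    rw [hslope]
    exact mul_le_mul_of_nonneg_left (hL.dirDeriv_le_slope u v (mul_pos ha ht)) ha.le

lemma ConvexOn.dirDeriv_add_le (hconv : ConvexOn ℝ univ h) (hL : LipschitzWith L h) (u v w : E) :
    dirDeriv h u (v + w) ≤ dirDeriv h u v + dirDeriv h u w := by
  have hmid : ∀ t : ℝ, 0 < t → (h (u + t • (v + w)) - h u) / t ≤
      (h (u + (2 * t) • v) - h u) / (2 * t) + (h (u + (2 * t) • w) - h u) / (2 * t) := by
    intro t ht
    have hconv_mid := hconv.2 (mem_univ (u + (2 * t) • v)) (mem_univ (u + (2 * t) • w))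
      (by norm_num : (0 : ℝ) ≤ 1 / 2) (by norm_num : (0 : ℝ) ≤ 1 / 2) (by norm_num)
    have hpt : (1 / 2 : ℝ) • (u + (2 * t) • v) + (1 / 2 : ℝ) • (u + (2 * t) • w) =
        u + t • (v + w) := by module
    rw [hpt, smul_eq_mul, smul_eq_mul] at hconv_mid
    rw [← add_div, div_le_div_iff₀ ht (by positivity)]
    nlinarith
  have hsplit : ∀ s r : ℝ, 0 < s → 0 < r → dirDeriv h u (v + w) ≤
      (h (u + s • v) - h u) / s + (h (u + r • w) - h u) / r := by
    intro s r hs hr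
    have hsr : 0 < min s r := lt_min hs hr
    have h2t : 2 * (min s r / 2) = min s r := by ring
    have := hmid (min s r / 2) (half_pos hsr)
    rw [h2t] at this
    linarith [hL.dirDeriv_le_slope u (v + w) (half_pos hsr),
      hconv.slope_le_slope u v hsr (min_le_left s r),
      hconv.slope_le_slope u w hsr (min_le_right s r)]
  have hv : ∀ r : ℝ, 0 < r → dirDeriv h u (v + w) - (h (u + r • w) - h u) / r ≤ dirDeriv h u v :=
    fun r hr => le_dirDeriv fun s hs => by linarith [hsplit s r hs hr]
  have hw : dirDeriv h u (v + w) - dirDeriv h u v ≤ dirDeriv h u w :=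
    le_dirDeriv fun r hr => by linarith [hv r hr]
  linarith

lemma ConvexOn.neg_dirDeriv_neg_le (hconv : ConvexOn ℝ univ h) (hL : LipschitzWith L h) (u v : E) :
    -dirDeriv h u (-v) ≤ dirDeriv h u v := by
  have := hconv.dirDeriv_add_le hL u v (-v)
  rw [add_neg_cancel, dirDeriv_zero] at this
  linarith

/-- Hahn–Banach for the sublinear functional `dirDeriv h u`; any linear minorant of it is a
subgradient. -/
theorem ConvexOn.exists_subgradient_eq_dirDeriv (hconv : ConvexOn ℝ univ h)
    (hL : LipschitzWith L h) (u v : E) :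
    ∃ φ : E →L[ℝ] ℝ, φ v = dirDeriv h u v ∧ ∀ z, h u + φ (z - u) ≤ h z := by
  let ℓ : E →ₗ.[ℝ] ℝ := LinearPMap.mkSpanSingleton' v (dirDeriv h u v) fun a ha => by
    rcases smul_eq_zero.1 ha with rfl | rfl <;> simp
  have hℓ : ∀ x : ℓ.domain, ℓ x ≤ dirDeriv h u x := by
    rintro ⟨x, hx⟩
    obtain ⟨a, rfl⟩ := Submodule.mem_span_singleton.1 hx
    simp only [ℓ, LinearPMap.mkSpanSingleton'_apply, RingHom.id_apply, smul_eq_mul]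
    rcases lt_trichotomy a 0 with ha | rfl | ha
    · have := hconv.neg_dirDeriv_neg_le hL u (a • v)
      rwa [← neg_smul, hL.dirDeriv_smul u v (neg_pos.2 ha), neg_mul, neg_neg] at this
    · simp
    · exact (hL.dirDeriv_smul u v ha).ge
  obtain ⟨g, hgℓ, hgD⟩ := exists_extension_of_le_sublinear ℓ (dirDeriv h u)
    (fun a ha x => hL.dirDeriv_smul u x ha) (hconv.dirDeriv_add_le hL u) hℓ
  have hg_le : ∀ x, g x ≤ L * ‖x‖ := fun x =>
    (hgD x).trans (le_of_abs_le (hL.abs_dirDeriv_le u x))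
  have hg_bound : ∀ x, ‖g x‖ ≤ L * ‖x‖ := fun x => by
    rw [Real.norm_eq_abs, abs_le]
    have := hg_le (-x)
    rw [map_neg, norm_neg] at this
    exact ⟨by linarith, hg_le x⟩
  refine ⟨g.mkContinuous L hg_bound, ?_, fun z => ?_⟩
  · exact (hgℓ ⟨v, Submodule.mem_span_singleton_self v⟩).trans
      (LinearPMap.mkSpanSingleton'_apply_self _ _ _ _)
  · have := (hgD (z - u)).trans (hL.dirDeriv_le_slope u (z - u) one_pos)
    simp only [one_smul, add_sub_cancel, div_one] at this
    simp only [LinearMap.mkContinuous_apply]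
    linarith

end DirDeriv

section Taylor

variable {E F : Type*} [NormedAddCommGroup E] [NormedSpace ℝ E] [NormedAddCommGroup F]
  [NormedSpace ℝ F] {c : E → F} {c' : E → E →L[ℝ] F} {β : ℝ≥0}

lemma norm_sub_sub_fderiv_le (hc : ∀ x, HasFDerivAt c (c' x) x) (hβ : LipschitzWith β c')
    (a b : E) : ‖c b - c a - c' a (b - a)‖ ≤ β / 2 * ‖b - a‖ ^ 2 := by
  set v := b - a
  let φ : ℝ → F := fun t => c (a + t • v) - c a - t • c' a v
  let φ' : ℝ → F := fun t => c' (a + t • v) v - c' a v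
  have hφ : ∀ t, HasDerivAt φ (φ' t) t := fun t => by
    have hline : HasDerivAt (fun t : ℝ => a + t • v) v t := by
      simpa using ((hasDerivAt_id t).smul_const v).const_add a
    exact ((((hc _).comp_hasDerivAt t hline).sub_const (c a)).sub
      ((hasDerivAt_id t).smul_const (c' a v))).congr_deriv (by simp [φ'])
  have hφ'_le : ∀ t ∈ Ico (0 : ℝ) 1, ‖φ' t‖ ≤ β * ‖v‖ ^ 2 * t := fun t ht => by
    calc ‖φ' t‖ = ‖(c' (a + t • v) - c' a) v‖ := rfl
      _ ≤ ‖c' (a + t • v) - c' a‖ * ‖v‖ := ContinuousLinearMap.le_opNorm _ _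
      _ ≤ β * ‖t • v‖ * ‖v‖ := by
        gcongr
        simpa [dist_eq_norm] using hβ.dist_le_mul (a + t • v) a
      _ = β * ‖v‖ ^ 2 * t := by rw [norm_smul, Real.norm_of_nonneg ht.1]; ring
  have hbound : ∀ t, HasDerivAt (fun s : ℝ => β * ‖v‖ ^ 2 / 2 * s ^ 2) (β * ‖v‖ ^ 2 * t) t :=
    fun t => ((hasDerivAt_pow 2 t).const_mul _).congr_deriv (by simp; ring)
  calc ‖c b - c a - c' a (b - a)‖ = ‖φ 1‖ := by simp [φ, v]
    _ ≤ β * ‖v‖ ^ 2 / 2 * 1 ^ 2 := image_norm_le_of_norm_deriv_right_le_deriv_boundary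
        (fun t _ => (hφ t).continuousAt.continuousWithinAt) (fun t _ => (hφ t).hasDerivWithinAt)
        (by simp [φ]) hbound hφ'_le (right_mem_Icc.2 zero_le_one)
    _ = β / 2 * ‖b - a‖ ^ 2 := by ring

lemma LipschitzWith.abs_comp_sub_comp_model_le {h : F → ℝ} {L : ℝ≥0} (hL : LipschitzWith L h)
    (hc : ∀ x, HasFDerivAt c (c' x) x) (hβ : LipschitzWith β c') (a b : E) :
    |h (c b) - h (c a + c' a (b - a))| ≤ L * β / 2 * ‖b - a‖ ^ 2 := by
  calc |h (c b) - h (c a + c' a (b - a))| ≤ L * ‖c b - (c a + c' a (b - a))‖ := by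
        simpa [← dist_eq_norm, Real.dist_eq] using hL.dist_le_mul _ _
    _ ≤ L * (β / 2 * ‖b - a‖ ^ 2) := by
        rw [← sub_sub]
        gcongr
        exact norm_sub_sub_fderiv_le hc hβ a b
    _ = L * β / 2 * ‖b - a‖ ^ 2 := by ring

end Taylor

lemma exists_forall_le_of_quadratic_growth {E : Type*} [NormedAddCommGroup E] [ProperSpace E]
    {f : E → ℝ} (hf : Continuous f) (p : E) {a b : ℝ} (ha : 0 < a)
    (hgrowth : ∀ z, b + a * ‖z - p‖ ^ 2 ≤ f z) : ∃ z, ∀ w, f z ≤ f w := by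
  refine hf.exists_forall_le' p ?_
  filter_upwards [(tendsto_dist_right_cocompact_atTop p).eventually_ge_atTop
    (max 1 ((f p - b) / a))] with z hz
  rw [dist_eq_norm] at hz
  have h1 : 1 ≤ ‖z - p‖ := (le_max_left _ _).trans hz
  have h2 : f p - b ≤ a * ‖z - p‖ := by
    rw [← div_le_iff₀' ha]
    exact (le_max_right _ _).trans hz
  nlinarith [hgrowth z, mul_le_mul_of_nonneg_left h1 (by positivity : 0 ≤ a * ‖z - p‖)]

lemma infDist_le_of_forall_exists_inner_le {F : Type*} [NormedAddCommGroup F]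
    [InnerProductSpace ℝ F] {K : Set F} (hne : K.Nonempty) (hK : IsComplete K)
    (hconv : Convex ℝ K) {ζ : F} {σ : ℝ} (hσ : 0 ≤ σ)
    (H : ∀ d, ∃ k ∈ K, ⟪ζ, d⟫ - σ * ‖d‖ ≤ ⟪k, d⟫) : Metric.infDist ζ K ≤ σ := by
  obtain ⟨π, hπ, hπmin⟩ := exists_norm_eq_iInf_of_complete_convex hne hK hconv ζ
  have hproj := (norm_eq_iInf_iff_real_inner_le_zero hconv hπ).1 hπmin
  obtain ⟨k, hk, hkd⟩ := H (ζ - π)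
  have hsq : ‖ζ - π‖ ^ 2 ≤ σ * ‖ζ - π‖ := by
    have := hproj k hk
    rw [← real_inner_self_eq_norm_sq]
    simp only [inner_sub_left, inner_sub_right, real_inner_comm] at this hkd ⊢
    linarith
  calc Metric.infDist ζ K ≤ ‖ζ - π‖ := dist_eq_norm ζ π ▸ Metric.infDist_le_dist_of_mem hπ
    _ ≤ σ := by nlinarith [norm_nonneg (ζ - π)]

local notation "𝔼" n:max => EuclideanSpace ℝ (Fin n)

section Subdifferential

variable {n m : ℕ} {h : 𝔼 m → ℝ} {L : ℝ≥0}

lemma exists_mem_convexSubdiff_inner_eq_dirDeriv (hconv : ConvexOn ℝ univ h)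
    (hL : LipschitzWith L h) (u v : 𝔼 m) :
    ∃ w ∈ convexSubdiff h u, ⟪w, v⟫ = dirDeriv h u v := by
  obtain ⟨φ, hφv, hφ⟩ := hconv.exists_subgradient_eq_dirDeriv hL u v
  refine ⟨(InnerProductSpace.toDual ℝ (𝔼 m)).symm φ, fun z => ?_, ?_⟩ <;>
    rw [InnerProductSpace.toDual_symm_apply]
  exacts [hφ z, hφv]

lemma norm_le_of_mem_convexSubdiff (hL : LipschitzWith L h) {u w : 𝔼 m}
    (hw : w ∈ convexSubdiff h u) : ‖w‖ ≤ L := by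
  have hsub := hw (u + w)
  have hlip : h (u + w) - h u ≤ L * ‖w‖ := by
    simpa [← dist_eq_norm, Real.dist_eq] using le_of_abs_le (hL.dist_le_mul (u + w) u)
  rw [add_sub_cancel_left, real_inner_self_eq_norm_sq] at hsub
  nlinarith [norm_nonneg w]

lemma convex_convexSubdiff (u : 𝔼 m) : Convex ℝ (convexSubdiff h u) := by
  intro w₁ hw₁ w₂ hw₂ a b ha hb hab z
  have := add_le_add (mul_le_mul_of_nonneg_left (hw₁ z) ha) (mul_le_mul_of_nonneg_left (hw₂ z) hb)
  rw [inner_add_left, real_inner_smul_left, real_inner_smul_left]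
  have hu : a * h u + b * h u = h u := by rw [← add_mul, hab, one_mul]
  have hz : a * h z + b * h z = h z := by rw [← add_mul, hab, one_mul]
  linarith

lemma isCompact_convexSubdiff (hL : LipschitzWith L h) (u : 𝔼 m) :
    IsCompact (convexSubdiff h u) := by
  have hclosed : IsClosed (convexSubdiff h u) := by
    simp only [convexSubdiff, ofPred_forall]
    exact isClosed_iInter fun z => isClosed_le (by fun_prop) continuous_const
  exact Metric.isCompact_of_isClosed_isBounded hclosed
    (isBounded_iff_forall_norm_le.2 ⟨L, fun _ hw => norm_le_of_mem_convexSubdiff hL hw⟩)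

variable {c : 𝔼 n → 𝔼 m} {c' : 𝔼 n → (𝔼 n →L[ℝ] 𝔼 m)}

lemma exists_mem_compSubdiff_inner_eq_dirDeriv (hconv : ConvexOn ℝ univ h)
    (hL : LipschitzWith L h) (x d : 𝔼 n) :
    ∃ k ∈ compSubdiff c c' h x, ⟪k, d⟫ = dirDeriv h (c x) (c' x d) := by
  obtain ⟨w, hw, hwd⟩ := exists_mem_convexSubdiff_inner_eq_dirDeriv hconv hL (c x) (c' x d)
  exact ⟨nablaC c' x w, mem_image_of_mem _ hw,
    (ContinuousLinearMap.adjoint_inner_left (c' x) d w).trans hwd⟩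

/-- The support function of `∂f(x)` at `d` is `h'(c x; c'(x) d)`. -/
lemma infDist_compSubdiff_le (hconv : ConvexOn ℝ univ h) (hL : LipschitzWith L h) {x ζ : 𝔼 n}
    {σ : ℝ} (hσ : 0 ≤ σ) (H : ∀ d, ⟪ζ, d⟫ - σ * ‖d‖ ≤ dirDeriv h (c x) (c' x d)) :
    Metric.infDist ζ (compSubdiff c c' h x) ≤ σ := by
  have hcompact : IsCompact (compSubdiff c c' h x) :=
    (isCompact_convexSubdiff hL (c x)).image (nablaC c' x).continuous
  have hconvex : Convex ℝ (compSubdiff c c' h x) :=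
    (convex_convexSubdiff (c x)).linear_image (nablaC c' x).toLinearMap
  obtain ⟨k, hk, -⟩ := exists_mem_compSubdiff_inner_eq_dirDeriv (c := c) (c' := c') hconv hL x 0
  refine infDist_le_of_forall_exists_inner_le ⟨k, hk⟩ hcompact.isComplete hconvex hσ fun d => ?_
  obtain ⟨k, hk, hkd⟩ := exists_mem_compSubdiff_inner_eq_dirDeriv hconv hL x d
  exact ⟨k, hk, hkd ▸ H d⟩

end Subdifferential

section Conjugate

variable {n m : ℕ} {h : 𝔼 m → ℝ}

lemma inner_sub_le_fenchelConj {y : 𝔼 m} (hy : inDomStar h y) (z : 𝔼 m) :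
    ⟪y, z⟫ - h z ≤ fenchelConj h y :=
  le_ciSup hy z

lemma inDomStar_of_forall_le {y : 𝔼 m} {b : ℝ} (H : ∀ z, ⟪y, z⟫ - h z ≤ b) : inDomStar h y :=
  ⟨b, by rintro _ ⟨z, rfl⟩; exact H z⟩

lemma fenchelConj_le_of_forall_le {y : 𝔼 m} {b : ℝ} (H : ∀ z, ⟪y, z⟫ - h z ≤ b) :
    fenchelConj h y ≤ b :=
  ciSup_le H

lemma inner_sub_le_of_mem_convexSubdiff {u w : 𝔼 m} (hw : w ∈ convexSubdiff h u) (z : 𝔼 m) :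
    ⟪w, z⟫ - h z ≤ ⟪w, u⟫ - h u := by
  have := hw z
  rw [inner_sub_right] at this
  linarith

lemma mem_convexSubdiff_of_add_fenchelConj_le {u y : 𝔼 m} (hy : inDomStar h y)
    (H : h u + fenchelConj h y ≤ ⟪y, u⟫) : y ∈ convexSubdiff h u := fun z => by
  have := inner_sub_le_fenchelConj hy z
  rw [inner_sub_right]
  linarith

lemma inner_segment_sub_le {y w : 𝔼 m} (hy : inDomStar h y) (hw : inDomStar h w) {t : ℝ}
    (ht₀ : 0 ≤ t) (ht₁ : t ≤ 1) (z : 𝔼 m) :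
    ⟪y + t • (w - y), z⟫ - h z ≤ (1 - t) * fenchelConj h y + t * fenchelConj h w := by
  have hyz := mul_le_mul_of_nonneg_left (inner_sub_le_fenchelConj hy z) (sub_nonneg.2 ht₁)
  have hwz := mul_le_mul_of_nonneg_left (inner_sub_le_fenchelConj hw z) ht₀
  rw [inner_add_left, real_inner_smul_left, inner_sub_left]
  linarith

variable {c : 𝔼 n → 𝔼 m} {c' : 𝔼 n → (𝔼 n →L[ℝ] 𝔼 m)} {ε : ℝ} {x : 𝔼 n}

/-- First-order optimality of the dual problem defining `Y^ε(x)`, tested along the segment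
from `y` towards `w`. -/
lemma inner_sub_le_fenchelConj_sub_of_mem_regDual {y w : 𝔼 m} (hy : y ∈ regDual c c' h ε x)
    (hw : inDomStar h w) :
    ⟪w - y, c x - ε • c' x (nablaC c' x y)⟫ ≤ fenchelConj h w - fenchelConj h y := by
  obtain ⟨hydom, hymax⟩ := hy
  set A := nablaC c' x
  refine le_of_forall_le_add_mul (C := ε / 2 * ‖A (w - y)‖ ^ 2) one_pos fun t ht ht₁ => ?_
  have hconj := fenchelConj_le_of_forall_le (inner_segment_sub_le hydom hw ht.le ht₁)
  have hmax := hymax _ (inDomStar_of_forall_le (inner_segment_sub_le hydom hw ht.le ht₁))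
  have hquad : ‖A (y + t • (w - y))‖ ^ 2 =
      ‖A y‖ ^ 2 + 2 * t * ⟪w - y, c' x (A y)⟫ + t ^ 2 * ‖A (w - y)‖ ^ 2 := by
    have hadj : ⟪A (w - y), A y⟫ = ⟪w - y, c' x (A y)⟫ :=
      ContinuousLinearMap.adjoint_inner_left _ _ _
    rw [map_add, map_smul, norm_add_sq_real, inner_smul_right, real_inner_comm, hadj, norm_smul,
      mul_pow, Real.norm_eq_abs, sq_abs]
    ring
  rw [hquad, inner_add_left, real_inner_smul_left] at hmax
  rw [inner_sub_right, real_inner_smul_right]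
  refine le_of_mul_le_mul_left ?_ ht
  nlinarith

lemma mem_convexSubdiff_of_mem_regDual {L : ℝ≥0} (hconv : ConvexOn ℝ univ h)
    (hL : LipschitzWith L h) {y : 𝔼 m} (hy : y ∈ regDual c c' h ε x) :
    y ∈ convexSubdiff h (c x - ε • c' x (nablaC c' x y)) := by
  set u := c x - ε • c' x (nablaC c' x y)
  obtain ⟨w, hw, -⟩ := exists_mem_convexSubdiff_inner_eq_dirDeriv hconv hL u 0
  have hwconj := fenchelConj_le_of_forall_le (inner_sub_le_of_mem_convexSubdiff hw)
  have := inner_sub_le_fenchelConj_sub_of_mem_regDual hy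
    (inDomStar_of_forall_le (inner_sub_le_of_mem_convexSubdiff hw))
  refine mem_convexSubdiff_of_add_fenchelConj_le hy.1 ?_
  rw [inner_sub_left] at this
  linarith

lemma add_inner_le_of_mem_convexSubdiff_model {p : 𝔼 n} {y : 𝔼 m}
    (hy : y ∈ convexSubdiff h (c x + c' x (p - x))) (z : 𝔼 n) :
    h (c x + c' x (p - x)) + ⟪nablaC c' x y, z - p⟫ ≤ h (c x + c' x (z - x)) := by
  have := hy (c x + c' x (z - x))
  rwa [add_sub_add_left_eq_sub, ← map_sub, sub_sub_sub_cancel_right,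
    ← ContinuousLinearMap.adjoint_inner_left] at this

end Conjugate

section Composite

variable {n m : ℕ} {c : 𝔼 n → 𝔼 m} {c' : 𝔼 n → (𝔼 n →L[ℝ] 𝔼 m)} {β : ℝ≥0}
  {h : 𝔼 m → ℝ} {L : ℝ≥0}

/-- `g` is a subgradient of the convex model of `f` at `x - ε g`, and the model is within
`Lβ/2 ‖z - x‖²` of `f`. -/
lemma comp_prox_step_le (hc : ∀ x, HasFDerivAt c (c' x) x) (hβ : LipschitzWith β c')
    (hconv : ConvexOn ℝ univ h) (hL : LipschitzWith L h) {x g : 𝔼 n} {ε : ℝ}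
    (hg : g ∈ Gcomp c c' h x ε) (z : 𝔼 n) :
    h (c (x - ε • g)) - L * β * ε ^ 2 * ‖g‖ ^ 2 ≤ h (c z) + L * β / 2 * ‖z - (x - ε • g)‖ ^ 2
      - (L * β * ε + 1) * ⟪g, z - (x - ε • g)⟫ := by
  obtain ⟨y, hy, rfl⟩ := hg
  beta_reduce
  set g := nablaC c' x y
  set p := x - ε • g
  have hpx : p - x = -(ε • g) := by simp [p]
  have hmodel := add_inner_le_of_mem_convexSubdiff_model (c := c) (c' := c') (p := p) (by
    rw [hpx, map_neg, map_smul, ← sub_eq_add_neg]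
    exact mem_convexSubdiff_of_mem_regDual hconv hL hy) z
  have hz := abs_le.1 (hL.abs_comp_sub_comp_model_le hc hβ x z)
  have hp := abs_le.1 (hL.abs_comp_sub_comp_model_le hc hβ x p)
  have hpx_sq : ‖p - x‖ ^ 2 = ε ^ 2 * ‖g‖ ^ 2 := by
    rw [hpx, norm_neg, norm_smul, mul_pow, Real.norm_eq_abs, sq_abs]
  have hzx_sq : ‖z - x‖ ^ 2 = ‖z - p‖ ^ 2 - 2 * ε * ⟪g, z - p⟫ + ε ^ 2 * ‖g‖ ^ 2 := by
    rw [show z - x = (z - p) - ε • g by simp only [p]; abel, norm_sub_sq_real, norm_smul, mul_pow,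
      Real.norm_eq_abs, sq_abs, real_inner_smul_right, real_inner_comm]
    ring
  rw [hpx_sq] at hp
  rw [hzx_sq] at hz
  nlinarith

lemma infDist_zero_compSubdiff_le_of_isMin (hc : ∀ x, HasFDerivAt c (c' x) x)
    (hβ : LipschitzWith β c') (hconv : ConvexOn ℝ univ h) (hL : LipschitzWith L h)
    {zs p a : 𝔼 n} {μ σ : ℝ} (hμ : 0 ≤ μ) (hσ : 0 ≤ σ)
    (hmin : ∀ z, h (c zs) + μ * ‖zs - p‖ ^ 2 - ⟪a, zs - p⟫ + σ * ‖zs - p‖ ≤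
      h (c z) + μ * ‖z - p‖ ^ 2 - ⟪a, z - p⟫ + σ * ‖z - p‖) :
    Metric.infDist 0 (compSubdiff c c' h zs) ≤ ‖a‖ + 2 * μ * ‖zs - p‖ + σ := by
  set ζ := a - (2 * μ) • (zs - p)
  suffices hζ : Metric.infDist ζ (compSubdiff c c' h zs) ≤ σ by
    calc Metric.infDist 0 (compSubdiff c c' h zs)
        ≤ Metric.infDist ζ (compSubdiff c c' h zs) + ‖ζ‖ := by
          simpa using Metric.infDist_le_infDist_add_dist (x := 0) (y := ζ)
      _ ≤ σ + (‖a‖ + 2 * μ * ‖zs - p‖) := by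
        refine add_le_add hζ ((norm_sub_le _ _).trans_eq ?_)
        rw [norm_smul, Real.norm_of_nonneg (by positivity)]
      _ = _ := by ring
  refine infDist_compSubdiff_le hconv hL hσ fun d =>
    le_dirDeriv_of_le_add_mul hconv (C := (μ + L * β / 2) * ‖d‖ ^ 2) fun t ht => ?_
  have hm := hmin (zs + t • d)
  have htaylor := (abs_le.1 (hL.abs_comp_sub_comp_model_le hc hβ zs (zs + t • d))).2
  have hsplit : zs + t • d - p = (zs - p) + t • d := by abel
  have hnorm : ‖(zs - p) + t • d‖ ≤ ‖zs - p‖ + t * ‖d‖ := by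
    calc ‖(zs - p) + t • d‖ ≤ ‖zs - p‖ + ‖t • d‖ := norm_add_le _ _
      _ = ‖zs - p‖ + t * ‖d‖ := by rw [norm_smul, Real.norm_of_nonneg ht.le]
  have htd : ‖t • d‖ ^ 2 = t ^ 2 * ‖d‖ ^ 2 := by
    rw [norm_smul, mul_pow, Real.norm_eq_abs, sq_abs]
  rw [hsplit, norm_add_sq_real, inner_add_right, real_inner_smul_right, real_inner_smul_right,
    htd] at hm
  rw [add_sub_cancel_left, map_smul, htd] at htaylor
  rw [inner_sub_left, real_inner_smul_left, ← sub_le_iff_le_add, le_div_iff₀ ht]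
  nlinarith [mul_le_mul_of_nonneg_left hnorm hσ]

theorem exists_near_infDist_zero_compSubdiff_le (hc : ∀ x, HasFDerivAt c (c' x) x)
    (hβ : LipschitzWith β c') (hconv : ConvexOn ℝ univ h) (hL : LipschitzWith L h)
    {x g : 𝔼 n} {ε : ℝ} (hε : 0 < ε) (hg : g ∈ Gcomp c c' h x ε) :
    ∃ z, ‖z - x‖ ≤ 2 * ε * ‖g‖ ∧
      Metric.infDist 0 (compSubdiff c c' h z) ≤ (3 * L * β * ε + 2) * ‖g‖ := by
  set p := x - ε • g
  set μ : ℝ := L * β / 2 + 1 / (2 * ε)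
  set σ : ℝ := L * β * ε * ‖g‖
  set a := (L * β * ε + 1) • g
  let η : 𝔼 n → ℝ := fun z => h (c z) + μ * ‖z - p‖ ^ 2 - ⟪a, z - p⟫ + σ * ‖z - p‖
  have hσ : 0 ≤ σ := by positivity
  have hlow : ∀ z, h (c p) - σ * (ε * ‖g‖) + 1 / (2 * ε) * ‖z - p‖ ^ 2 + σ * ‖z - p‖ ≤ η z :=
    fun z => by
      have := comp_prox_step_le hc hβ hconv hL hg z
      simp only [η, a, μ, σ, real_inner_smul_left]
      nlinarith
  have hcont : Continuous η := by
    have : Continuous c := continuous_iff_continuousAt.2 fun x => (hc x).continuousAt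
    have := hL.continuous
    fun_prop
  obtain ⟨zs, hzs⟩ := exists_forall_le_of_quadratic_growth hcont p
    (b := h (c p) - σ * (ε * ‖g‖)) (by positivity : 0 < 1 / (2 * ε))
    fun z => by nlinarith [hlow z, norm_nonneg (z - p)]
  have hr : ‖zs - p‖ ≤ ε * ‖g‖ := by
    have := (hlow zs).trans (hzs p)
    simp only [η, sub_self, norm_zero, inner_zero_right] at this
    by_contra! hfar
    nlinarith [mul_le_mul_of_nonneg_left hfar.le hσ, mul_pos (by positivity : 0 < 1 / (2 * ε))
      (pow_pos ((by positivity : 0 ≤ ε * ‖g‖).trans_lt hfar) 2)]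
  have hfermat := infDist_zero_compSubdiff_le_of_isMin hc hβ hconv hL (by positivity) hσ hzs
  refine ⟨zs, ?_, ?_⟩
  · calc ‖zs - x‖ ≤ ‖zs - p‖ + ‖p - x‖ := norm_sub_le_norm_sub_add_norm_sub _ _ _
      _ ≤ 2 * ε * ‖g‖ := by
        rw [show p - x = -(ε • g) by simp [p], norm_neg, norm_smul, Real.norm_of_nonneg hε.le]
        linarith
  · calc _ ≤ ‖a‖ + 2 * μ * ‖zs - p‖ + σ := hfermat
      _ ≤ (L * β * ε + 1) * ‖g‖ + 2 * μ * (ε * ‖g‖) + σ := by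
        rw [norm_smul, Real.norm_of_nonneg (by positivity)]
        gcongr
      _ = (3 * L * β * ε + 2) * ‖g‖ := by
        simp only [σ, μ]
        field_simp
        ring

end Composite

theorem composite_errorBound_of_metricSubregular_general {n m : ℕ}
    (c : EuclideanSpace ℝ (Fin n) → EuclideanSpace ℝ (Fin m))
    (c' : EuclideanSpace ℝ (Fin n) → (EuclideanSpace ℝ (Fin n) →L[ℝ] EuclideanSpace ℝ (Fin m)))
    (β : ℝ≥0) (hc : ∀ x, HasFDerivAt c (c' x) x) (hβ : LipschitzWith β c')
    (h : EuclideanSpace ℝ (Fin m) → ℝ) (L : ℝ≥0)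
    (hconv : ConvexOn ℝ Set.univ h) (hL : LipschitzWith L h)
    (xbar : EuclideanSpace ℝ (Fin n))
    (hstat : (0 : EuclideanSpace ℝ (Fin n)) ∈ compSubdiff c c' h xbar)
    (κ : ℝ) (hκ : 0 < κ)
    (hsubreg : ∃ τ₀ > (0 : ℝ), ∀ x : EuclideanSpace ℝ (Fin n), ‖x - xbar‖ < τ₀ →
      Metric.infDist x {z | (0 : EuclideanSpace ℝ (Fin n)) ∈ compSubdiff c c' h z} ≤
        κ * Metric.infDist 0 (compSubdiff c c' h x)) :
    ∀ εbar > (0 : ℝ), ∃ τ > (0 : ℝ), ∀ x : EuclideanSpace ℝ (Fin n), ‖x - xbar‖ < τ →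
      ∀ ε ∈ Set.Ioo (0 : ℝ) εbar, ∀ g ∈ Gcomp c c' h x ε,
        Metric.infDist x {z | (0 : EuclideanSpace ℝ (Fin n)) ∈ compSubdiff c c' h z} ≤
          ((3 * (L : ℝ) * (β : ℝ) * ε + 2) * κ + 2 * ε) * ‖g‖ := by
  intro εbar _
  obtain ⟨τ₀, hτ₀, hsub⟩ := hsubreg
  refine ⟨τ₀ / 2, half_pos hτ₀, fun x hx ε hε g hg => ?_⟩
  obtain ⟨z, hzx, hz⟩ := exists_near_infDist_zero_compSubdiff_le hc hβ hconv hL hε.1 hg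
  by_cases hnear : 2 * ε * ‖g‖ < τ₀ / 2
  · have hzbar : ‖z - xbar‖ < τ₀ := by
      linarith [norm_sub_le_norm_sub_add_norm_sub z x xbar]
    calc _ ≤ Metric.infDist z {z | (0 : EuclideanSpace ℝ (Fin n)) ∈ compSubdiff c c' h z} +
          dist x z := Metric.infDist_le_infDist_add_dist
      _ ≤ κ * ((3 * L * β * ε + 2) * ‖g‖) + 2 * ε * ‖g‖ := by
        rw [dist_comm, dist_eq_norm]
        exact add_le_add ((hsub z hzbar).trans (mul_le_mul_of_nonneg_left hz hκ.le)) hzx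
      _ = _ := by ring
  · calc _ ≤ dist x xbar := Metric.infDist_le_dist_of_mem hstat
      _ ≤ 2 * ε * ‖g‖ := by rw [dist_eq_norm]; linarith
      _ ≤ _ := by
        rw [add_mul]
        exact le_add_of_nonneg_left (by have := hε.1; positivity)

/-- error bound from metric subregularity: if `x̄` is a stationary
point of `f = h ∘ c` and `∂f` is metrically subregular at `(x̄, 0)` with modulus `κ`,
then for every `ε̄ > 0` there is `τ > 0` such that
`dist(x, (∂f)⁻¹(0)) ≤ ((3Lβε + 2)κ + 2ε) ‖G(x, ε)‖` for all `x ∈ 𝔹_τ(x̄)` and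
`ε ∈ (0, ε̄)`. -/
theorem composite_errorBound_of_metricSubregular {n m : ℕ}
    (c : EuclideanSpace ℝ (Fin n) → EuclideanSpace ℝ (Fin m))
    (c' : EuclideanSpace ℝ (Fin n) → (EuclideanSpace ℝ (Fin n) →L[ℝ] EuclideanSpace ℝ (Fin m)))
    (β : ℝ≥0) (hc : ∀ x, HasFDerivAt c (c' x) x) (hβ : LipschitzWith β c')
    (h : EuclideanSpace ℝ (Fin m) → ℝ) (L : ℝ≥0)
    (hconv : ConvexOn ℝ Set.univ h) (hL : LipschitzWith L h)
    (hbdd : BddBelow (Set.range h))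
    (xbar : EuclideanSpace ℝ (Fin n))
    (hstat : (0 : EuclideanSpace ℝ (Fin n)) ∈ compSubdiff c c' h xbar)
    (κ : ℝ) (hκ : 0 < κ)
    (hsubreg : ∃ τ₀ > (0 : ℝ), ∀ x : EuclideanSpace ℝ (Fin n), ‖x - xbar‖ < τ₀ →
      Metric.infDist x {z | (0 : EuclideanSpace ℝ (Fin n)) ∈ compSubdiff c c' h z} ≤
        κ * Metric.infDist 0 (compSubdiff c c' h x)) :
    ∀ εbar > (0 : ℝ), ∃ τ > (0 : ℝ), ∀ x : EuclideanSpace ℝ (Fin n), ‖x - xbar‖ < τ →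
      ∀ ε ∈ Set.Ioo (0 : ℝ) εbar, ∀ g ∈ Gcomp c c' h x ε,
        Metric.infDist x {z | (0 : EuclideanSpace ℝ (Fin n)) ∈ compSubdiff c c' h z} ≤
          ((3 * (L : ℝ) * (β : ℝ) * ε + 2) * κ + 2 * ε) * ‖g‖ :=
  composite_errorBound_of_metricSubregular_general c c' β hc hβ h L hconv hL xbar hstat κ hκ hsubreg
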